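/- arXiv:cond-mat/9702111 — 3 statements merged into one kernel-verified Lean document; each statement's English description precedes it below -/
import Mathlib

section
/- Let A, B_1, ..., B_N be bounded operators such that A + sum_{i in D} B_i is invertible for every subset D of {1,...,N}. Then (A + sum_{i=1}^N B_i)^{-1} equals the sum over n from 0 to N, with sign (-1)^n, over ordered sequences of distinct indices (i_1,...,i_n) from {1,...,N}, of A^{-1} O_n A^{-1} ... O_1 A^{-1}, where O_p = B_{i_p} - (sum_{k=1}^{p} B_{i_k}) (A + sum_{k=1}^{p} B_{i_k})^{-1} B_{i_p}. -/
/-!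
Writing `Sₚ = B_{i₁} + ⋯ + B_{iₚ}`, one has `Oₚ = A (A + Sₚ)⁻¹ B_{iₚ}`, so each term of the
expansion is `(A + Sₙ)⁻¹ B_{iₙ} ⋯ (A + S₁)⁻¹ B_{i₁} A⁻¹`. For these terms the expansion follows by
induction on the index set from the resolvent identity
`(A + W)⁻¹ = A⁻¹ - ∑ᵢ (A + W)⁻¹ Bᵢ A⁻¹`, `W = ∑ᵢ Bᵢ`, after expanding each
`(A + W)⁻¹ = ((A + Bᵢ) + ∑_{j ≠ i} Bⱼ)⁻¹` around `A + Bᵢ`: the index `i` becomes `i₁`.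
-/

open Finset

namespace Ring

variable {R : Type*} [Ring R]

theorem inverse_add_eq_sub {A W : R} (hA : IsUnit A) (hAW : IsUnit (A + W)) :
    inverse (A + W) = inverse A - inverse (A + W) * W * inverse A := by
  have h := inverse_sub_inverse (iff_of_true hAW hA)
  rwa [sub_add_cancel_left, mul_neg, neg_mul, sub_eq_iff_eq_add', ← sub_eq_add_neg] at h

theorem inverse_mul_sub_mul_inverse_add_mul {A S : R} (hA : IsUnit A) (hAS : IsUnit (A + S))
    (X : R) : inverse A * (X - S * inverse (A + S) * X) = inverse (A + S) * X := by
  have hA_inv : A * inverse (A + S) = 1 - S * inverse (A + S) := by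
    rw [eq_sub_iff_add_eq, ← add_mul, mul_inverse_cancel _ hAS]
  rw [← one_sub_mul, ← hA_inv, ← mul_assoc, ← mul_assoc, inverse_mul_cancel _ hA, one_mul]

end Ring

theorem List.mul_prod_map_mul {M : Type*} [Monoid M] {γ : Type*} (x : M) (f : γ → M)
    (l : List γ) : x * (l.map (f · * x)).prod = (l.map (x * f ·)).prod * x := by
  induction l with
  | nil => simp
  | cons a l ih => simp only [List.map_cons, List.prod_cons, mul_assoc, ih]

theorem Fin.sum_Iic_succ {M : Type*} [AddCommMonoid M] {n : ℕ} (f : Fin (n + 1) → M)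
    (i : Fin n) : ∑ k ∈ Iic i.succ, f k = f 0 + ∑ k ∈ Iic i, f k.succ := by
  rw [← Finset.Icc_bot, Finset.Icc_eq_cons_Ioc bot_le, Finset.sum_cons, _root_.bot_eq_zero,
    ← Fin.map_succEmb_Iic, Finset.sum_map]
  rfl

section Expansion

variable {R : Type*} [Ring R] {ι : Type*}

noncomputable def decouplingTerm (B : ι → R) (A : R) {n : ℕ} (σ : Fin n ↪ ι) : R :=
  ((List.finRange n).reverse.map (fun p : Fin n =>
      Ring.inverse (A + ∑ k ∈ Iic p, B (σ k)) * B (σ p))).prod * Ring.inverse A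

theorem decouplingTerm_zero (B : ι → R) (A : R) (σ : Fin 0 ↪ ι) :
    decouplingTerm B A σ = Ring.inverse A := by
  simp [decouplingTerm]

theorem decouplingTerm_succ (B : ι → R) (A : R) {m : ℕ} (τ : Fin (m + 1) ↪ ι) :
    decouplingTerm B A τ =
      decouplingTerm B (A + B (τ 0)) (Fin.Embedding.tail τ) * B (τ 0) * Ring.inverse A := by
  simp only [decouplingTerm, List.finRange_succ, List.reverse_cons, List.map_append,
    List.prod_append, List.map_reverse, List.map_map, Function.comp_def, Fin.sum_Iic_succ,
    add_assoc, List.map_cons, List.map_nil, List.prod_cons, List.prod_nil, mul_one,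
    Fin.Embedding.coe_tail, Fin.tail]
  have hIic : Iic (0 : Fin (m + 1)) = {0} := Iic_bot
  simp [hIic, mul_assoc]

theorem decouplingTerm_eq_inverse_mul_prod (B : ι → R) {A : R} (hA : IsUnit A) {n : ℕ}
    (σ : Fin n ↪ ι) (hσ : ∀ p, IsUnit (A + ∑ k ∈ Iic p, B (σ k))) :
    decouplingTerm B A σ =
      Ring.inverse A * ((List.finRange n).reverse.map (fun p : Fin n =>
        (B (σ p) - (∑ k ∈ Iic p, B (σ k)) * Ring.inverse (A + ∑ k ∈ Iic p, B (σ k)) * B (σ p)) *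
          Ring.inverse A)).prod := by
  rw [List.mul_prod_map_mul, decouplingTerm]
  congr 2
  exact List.map_congr_left fun p _ => (Ring.inverse_mul_sub_mul_inverse_add_mul hA (hσ p) _).symm

variable [DecidableEq ι] [Fintype ι]

noncomputable def embeddingsInto (S : Finset ι) (n : ℕ) : Finset (Fin n ↪ ι) :=
  {σ | ∀ p, σ p ∈ S}

theorem embeddingsInto_univ (n : ℕ) : embeddingsInto (univ : Finset ι) n = univ := by
  simp [embeddingsInto]

theorem sum_embeddingsInto_succ {M : Type*} [AddCommMonoid M] (S : Finset ι) (m : ℕ)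
    (g : ι → (Fin m ↪ ι) → M) :
    ∑ τ ∈ embeddingsInto S (m + 1), g (τ 0) (Fin.Embedding.tail τ) =
      ∑ i ∈ S, ∑ σ ∈ embeddingsInto (S.erase i) m, g i σ := by
  rw [sum_sigma']
  refine sum_bij' (fun τ _ => ⟨τ 0, Fin.Embedding.tail τ⟩)
    (fun x hx => Fin.Embedding.cons x.2 (a := x.1) ?_) ?_ ?_ ?_ ?_ ?_
  · obtain ⟨-, hx⟩ := mem_sigma.mp hx
    rintro ⟨p, hp⟩
    simpa [hp] using (mem_filter.mp hx).2 p
  · intro τ hτ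
    simp only [embeddingsInto, mem_filter, mem_univ, true_and] at hτ
    simp only [mem_sigma, embeddingsInto, mem_filter, mem_univ, true_and,
      mem_erase, Fin.Embedding.coe_tail, Fin.tail, ne_eq]
    exact ⟨hτ 0, fun p => ⟨fun h => Fin.succ_ne_zero p (τ.injective h), hτ p.succ⟩⟩
  · intro x hx
    obtain ⟨hi, hσ⟩ := mem_sigma.mp hx
    simp only [embeddingsInto, mem_filter, mem_univ, true_and] at hσ ⊢
    refine Fin.cases ?_ (fun p => ?_)
    · simpa using hi
    · simpa using mem_of_mem_erase (hσ p)
  · intro τ _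
    ext p
    refine Fin.cases ?_ (fun p => ?_) p <;> simp [Fin.tail]
  · intro x _
    rfl
  · intro τ _
    rfl

noncomputable def decouplingSum (B : ι → R) (A : R) (S : Finset ι) : R :=
  ∑ n ∈ range (#S + 1), (-1 : ℤ) ^ n • ∑ σ ∈ embeddingsInto S n, decouplingTerm B A σ

theorem decouplingSum_eq_sub (B : ι → R) (A : R) (S : Finset ι) :
    decouplingSum B A S =
      Ring.inverse A - ∑ i ∈ S, decouplingSum B (A + B i) (S.erase i) * B i * Ring.inverse A := by
  have hzero : ∑ σ ∈ embeddingsInto S 0, decouplingTerm B A σ = Ring.inverse A := by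
    simp [embeddingsInto, decouplingTerm_zero]
  have hsucc (n : ℕ) : ∑ τ ∈ embeddingsInto S (n + 1), decouplingTerm B A τ =
      ∑ i ∈ S, (∑ σ ∈ embeddingsInto (S.erase i) n, decouplingTerm B (A + B i) σ) * B i *
        Ring.inverse A := by
    simp only [decouplingTerm_succ, sum_mul]
    exact sum_embeddingsInto_succ S n fun i σ => decouplingTerm B (A + B i) σ * B i * Ring.inverse A
  rw [decouplingSum, sum_range_succ', pow_zero, one_smul, hzero, add_comm, sub_eq_add_neg,
    ← sum_neg_distrib]
  congr 1
  calc ∑ n ∈ range #S, (-1 : ℤ) ^ (n + 1) • ∑ τ ∈ embeddingsInto S (n + 1), decouplingTerm B A τ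
      = ∑ n ∈ range #S, ∑ i ∈ S, -(((-1 : ℤ) ^ n •
          ∑ σ ∈ embeddingsInto (S.erase i) n, decouplingTerm B (A + B i) σ) * B i *
            Ring.inverse A) := by
        refine sum_congr rfl fun n _ => ?_
        rw [hsucc, smul_sum]
        refine sum_congr rfl fun i _ => ?_
        rw [pow_succ, mul_neg_one, neg_smul, smul_mul_assoc, smul_mul_assoc]
    _ = ∑ i ∈ S, -(decouplingSum B (A + B i) (S.erase i) * B i * Ring.inverse A) := by
        rw [sum_comm]
        refine sum_congr rfl fun i hi => ?_
        rw [decouplingSum, card_erase_add_one hi, sum_mul, sum_mul, sum_neg_distrib]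

theorem inverse_add_sum_eq_decouplingSum (B : ι → R) (S : Finset ι) (A : R)
    (hinv : ∀ D ⊆ S, IsUnit (A + ∑ i ∈ D, B i)) :
    Ring.inverse (A + ∑ i ∈ S, B i) = decouplingSum B A S := by
  induction S using Finset.strongInduction generalizing A with
  | H S ih =>
  have hA : IsUnit A := by simpa using hinv ∅ (empty_subset S)
  have herase (i : ι) (hi : i ∈ S) :
      decouplingSum B (A + B i) (S.erase i) = Ring.inverse (A + ∑ j ∈ S, B j) := by
    rw [← ih _ (erase_ssubset hi), add_assoc, add_sum_erase S B hi]
    intro D hD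
    rw [add_assoc, ← sum_insert fun h => notMem_erase i S (hD h)]
    exact hinv _ (insert_subset hi (hD.trans (erase_subset i S)))
  have hsum : ∑ i ∈ S, decouplingSum B (A + B i) (S.erase i) * B i * Ring.inverse A =
      Ring.inverse (A + ∑ i ∈ S, B i) * (∑ i ∈ S, B i) * Ring.inverse A := by
    rw [mul_sum, sum_mul]
    exact sum_congr rfl fun i hi => by rw [herase i hi]
  rw [decouplingSum_eq_sub, hsum]
  exact Ring.inverse_add_eq_sub hA (hinv S subset_rfl)

end Expansion

theorem decoupling_expansion_general {H : Type*} [NormedAddCommGroup H]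
    [InnerProductSpace ℂ H] {N : ℕ}
    (A : H →L[ℂ] H) (B : Fin N → H →L[ℂ] H)
    (hinv : ∀ D : Finset (Fin N), IsUnit (A + ∑ i ∈ D, B i)) :
    Ring.inverse (A + ∑ i, B i) =
      ∑ n ∈ Finset.range (N + 1), ((-1 : ℤ) ^ n) •
        ∑ σ : Fin n ↪ Fin N,
          Ring.inverse A *
            (((List.finRange n).reverse.map (fun p : Fin n =>
              (B (σ p) -
                (∑ k ∈ Finset.Iic p, B (σ k)) *
                  Ring.inverse (A + ∑ k ∈ Finset.Iic p, B (σ k)) *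
                  B (σ p)) * Ring.inverse A)).prod) := by
  have hA : IsUnit A := by simpa using hinv ∅
  rw [inverse_add_sum_eq_decouplingSum B univ A fun D _ => hinv D, decouplingSum, card_univ,
    Fintype.card_fin]
  refine sum_congr rfl fun n _ => ?_
  rw [embeddingsInto_univ]
  refine congrArg _ (sum_congr rfl fun σ _ => decouplingTerm_eq_inverse_mul_prod B hA σ ?_)
  intro p
  simpa [sum_map] using hinv ((Iic p).map σ)

/-- Large-field decoupling expansion (Lemma 3): if `A + ∑_{i ∈ D} Bᵢ` is
invertible for every subset `D` of the index set, then
`(A + ∑ᵢ Bᵢ)⁻¹ = ∑_{n=0}^{N} (-1)ⁿ ∑_{(i₁,…,iₙ) distinct}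
A⁻¹ Oₙ A⁻¹ ⋯ O₁ A⁻¹`, where
`Oₚ = B_{iₚ} - (∑_{k ≤ p} B_{iₖ}) (A + ∑_{k ≤ p} B_{iₖ})⁻¹ B_{iₚ}`. -/
theorem decoupling_expansion {H : Type*} [NormedAddCommGroup H]
    [InnerProductSpace ℂ H] [CompleteSpace H] {N : ℕ}
    (A : H →L[ℂ] H) (B : Fin N → H →L[ℂ] H)
    (hinv : ∀ D : Finset (Fin N), IsUnit (A + ∑ i ∈ D, B i)) :
    Ring.inverse (A + ∑ i, B i) =
      ∑ n ∈ Finset.range (N + 1), ((-1 : ℤ) ^ n) •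
        ∑ σ : Fin n ↪ Fin N,
          Ring.inverse A *
            (((List.finRange n).reverse.map (fun p : Fin n =>
              (B (σ p) -
                (∑ k ∈ Finset.Iic p, B (σ k)) *
                  Ring.inverse (A + ∑ k ∈ Finset.Iic p, B (σ k)) *
                  B (σ p)) * Ring.inverse A)).prod) :=
  decoupling_expansion_general A B hinv
end

section
/- Cayley's formula: the number of labeled trees on m+1 vertices is (m+1)^(m-1). -/
/-!
Orienting every edge of a tree towards a chosen root `r` turns a tree with a root into a map
`p : V → V` with `p r = r` all of whose orbits reach `r`, and conversely; so the number of such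
rooted maps is `t · n`, where `t` is the number of trees and `n = |V|`.

Joyal's bijection matches rooted maps `p` with a second marked vertex `b` against all maps
`f : V → V`. The path `b, p b, …, r` (the spine) becomes the set of periodic points of `f`:
`f` sends the `i`-th smallest spine vertex to the `i`-th vertex of the spine and agrees with `p`
elsewhere. Conversely the spine is read off `f` as the list of the values `f x` at its periodic
points `x`, taken in increasing order. Hence `t · n² = nⁿ`.
-/

open Function Set SimpleGraph

namespace Function

variable {α : Type*} {f g : α → α} {s : Set α}

theorem exists_iterate_mem_periodicPts [Finite α] (f : α → α) (x : α) :
    ∃ n, f^[n] x ∈ periodicPts f := by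
  obtain ⟨m, n, hne, hmn⟩ := Finite.exists_ne_map_eq_of_infinite (f^[·] x)
  wlog hlt : m < n generalizing m n
  · exact this n m hne.symm hmn.symm (hne.lt_or_gt.resolve_left hlt)
  refine ⟨m, mk_mem_periodicPts (Nat.sub_pos_of_lt hlt) ?_⟩
  rw [IsPeriodicPt, IsFixedPt, ← iterate_add_apply, Nat.sub_add_cancel hlt.le]
  exact hmn.symm

theorem periodicPts_eq_of_injOn (hs : s.Finite) (hmaps : MapsTo g s s) (hinj : InjOn g s)
    (hreach : ∀ x, ∃ n, g^[n] x ∈ s) : periodicPts g = s := by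
  ext x
  constructor
  · rintro ⟨n, hn, hx⟩
    obtain ⟨k, hk⟩ := hreach x
    rw [← (hx.mul_const k).eq, ← Nat.sub_add_cancel (Nat.le_mul_of_pos_left k hn),
      iterate_add_apply]
    exact hmaps.iterate _ hk
  · intro hx
    have : Finite s := hs
    have hinj' : Injective (hmaps.restrict g s s) := hmaps.restrict_inj.mpr hinj
    exact Semiconj.mapsTo_periodicPts (g := Subtype.val) (fun _ => rfl)
      (hinj'.mem_periodicPts ⟨x, hx⟩)

theorem exists_iterate_mem_of_eqOn (hfg : EqOn g f sᶜ) {x : α} {n : ℕ} (hn : f^[n] x ∈ s) :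
    ∃ k, g^[k] x ∈ s := by
  induction n generalizing x with
  | zero => exact ⟨0, hn⟩
  | succ n ih =>
    by_cases hx : x ∈ s
    · exact ⟨0, hx⟩
    · obtain ⟨k, hk⟩ := ih (x := f x) (by rwa [← iterate_succ_apply])
      exact ⟨k + 1, by rwa [iterate_succ_apply, hfg hx]⟩

end Function

variable {V : Type*}

def Function.IsRootedAt (p : V → V) (r : V) : Prop := IsFixedPt p r ∧ ∀ v, ∃ k, p^[k] v = r

namespace Function.IsRootedAt

variable {p : V → V} {r v b : V}

theorem eq_of_isPeriodicPt (h : IsRootedAt p r) {n : ℕ} (hn : 0 < n) (hv : IsPeriodicPt p n v) :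
    v = r := by
  obtain ⟨k, hk⟩ := h.2 v
  rw [← (hv.mul_const k).eq, ← Nat.sub_add_cancel (Nat.le_mul_of_pos_left k hn),
    iterate_add_apply, hk, h.1.iterate]

theorem apply_ne_self (h : IsRootedAt p r) (hv : v ≠ r) : p v ≠ v :=
  fun hfix => hv (h.eq_of_isPeriodicPt one_pos (IsFixedPt.isPeriodicPt hfix 1))

variable [DecidableEq V]

noncomputable def depth (h : IsRootedAt p r) (v : V) : ℕ := Nat.find (h.2 v)

theorem iterate_depth (h : IsRootedAt p r) (v : V) : p^[h.depth v] v = r := Nat.find_spec (h.2 v)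

theorem depth_le (h : IsRootedAt p r) {k : ℕ} (hk : p^[k] v = r) : h.depth v ≤ k :=
  Nat.find_min' _ hk

theorem depth_eq_zero_iff (h : IsRootedAt p r) : h.depth v = 0 ↔ v = r :=
  ⟨fun h0 => by simpa [h0] using h.iterate_depth v, fun hv => by
    subst hv; exact Nat.le_zero.mp (h.depth_le (k := 0) rfl)⟩

theorem depth_apply_add_one (h : IsRootedAt p r) (hv : v ≠ r) :
    h.depth (p v) + 1 = h.depth v := by
  have hpos : 0 < h.depth v := Nat.pos_of_ne_zero (h.depth_eq_zero_iff.not.mpr hv)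
  have h1 : h.depth v ≤ h.depth (p v) + 1 := h.depth_le (by
    rw [iterate_succ_apply, h.iterate_depth])
  have h2 : h.depth (p v) ≤ h.depth v - 1 := h.depth_le (by
    rw [← iterate_succ_apply, Nat.succ_eq_add_one, Nat.sub_add_cancel hpos, h.iterate_depth])
  omega

theorem depth_apply_le (h : IsRootedAt p r) (v : V) : h.depth (p v) ≤ h.depth v := by
  by_cases hv : v = r
  · subst hv; rw [h.1.eq]
  · exact (h.depth_apply_add_one hv).le.trans' (Nat.le_succ _)

theorem iterate_injOn (h : IsRootedAt p r) : InjOn (p^[·] v) (Iic (h.depth v)) := by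
  intro i hi j hj hij
  wlog hlt : i < j generalizing i j
  · rcases (not_lt.mp hlt).eq_or_lt with heq | hgt
    · exact heq.symm
    · exact (this hj hi hij.symm hgt).symm
  have hper : IsPeriodicPt p (j - i) (p^[i] v) := by
    rw [IsPeriodicPt, IsFixedPt, ← iterate_add_apply, Nat.sub_add_cancel hlt.le]
    exact hij.symm
  have := h.depth_le (h.eq_of_isPeriodicPt (Nat.sub_pos_of_lt hlt) hper)
  simp only [mem_Iic] at hj
  omega

noncomputable def spine (h : IsRootedAt p r) (b : V) : List V := List.iterate p b (h.depth b + 1)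

theorem length_spine (h : IsRootedAt p r) : (h.spine b).length = h.depth b + 1 :=
  List.length_iterate _ _ _

theorem getElem_spine (h : IsRootedAt p r) {i : ℕ} (hi : i < (h.spine b).length) :
    (h.spine b)[i] = p^[i] b :=
  List.getElem_iterate _ _ _ _ _

theorem nodup_spine (h : IsRootedAt p r) : (h.spine b).Nodup := by
  refine List.nodup_iff_injective_getElem.mpr fun i j hij => Fin.ext ?_
  have hi : (i : ℕ) < h.depth b + 1 := h.length_spine ▸ i.2
  have hj : (j : ℕ) < h.depth b + 1 := h.length_spine ▸ j.2
  simp only [getElem_spine] at hij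
  exact h.iterate_injOn (mem_Iic.mpr (by omega)) (mem_Iic.mpr (by omega)) hij

theorem spine_ne_nil (h : IsRootedAt p r) : h.spine b ≠ [] :=
  List.ne_nil_of_length_pos (by simp [h.length_spine])

theorem root_mem_spine (h : IsRootedAt p r) : r ∈ h.spine b :=
  List.mem_iterate.mpr ⟨h.depth b, by omega, (h.iterate_depth b).symm⟩

theorem getLast_spine (h : IsRootedAt p r) : (h.spine b).getLast h.spine_ne_nil = r := by
  rw [List.getLast_eq_getElem, getElem_spine, length_spine, Nat.add_sub_cancel, h.iterate_depth]

theorem head?_spine (h : IsRootedAt p r) : (h.spine b).head? = some b := rfl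

theorem getLast?_spine (h : IsRootedAt p r) : (h.spine b).getLast? = some r := by
  rw [List.getLast?_eq_some_getLast h.spine_ne_nil, h.getLast_spine]

end Function.IsRootedAt

namespace SimpleGraph

variable {p : V → V} {r v w : V}

def fromFun (p : V → V) : SimpleGraph V := fromRel fun a b => p a = b

theorem fromFun_adj : (fromFun p).Adj v w ↔ v ≠ w ∧ (p v = w ∨ p w = v) := fromRel_adj _ _ _

theorem fromFun_adj_apply (hv : p v ≠ v) : (fromFun p).Adj v (p v) :=
  fromFun_adj.mpr ⟨hv.symm, Or.inl rfl⟩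

theorem exists_walk_fromFun_iterate (p : V → V) (v : V) (k : ℕ) :
    ∃ c : (fromFun p).Walk v (p^[k] v), c.length ≤ k := by
  induction k with
  | zero => exact ⟨Walk.nil, le_rfl⟩
  | succ k ih =>
    obtain ⟨c, hc⟩ := ih
    rw [iterate_succ_apply']
    by_cases hfix : p (p^[k] v) = p^[k] v
    · rw [hfix]; exact ⟨c, by omega⟩
    · exact ⟨c.concat (fromFun_adj_apply hfix), by rw [Walk.length_concat]; omega⟩

theorem IsTree.eq_of_le {T G : SimpleGraph V} (hT : T.IsTree) (hle : T ≤ G) (hG : G.IsAcyclic) :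
    T = G :=
  le_antisymm hle <|
    ((hT.connected.mono hle).maximal_le_isAcyclic_iff_isTree hle |>.mpr hT).2 ⟨le_rfl, hG⟩ hle

theorem Connected.exists_adj_dist_lt {G : SimpleGraph V} (hG : G.Connected) (hv : v ≠ r) :
    ∃ w, G.Adj v w ∧ G.dist w r < G.dist v r := by
  obtain ⟨c, hc⟩ := hG.exists_walk_length_eq_dist v r
  cases c with
  | nil => exact absurd rfl hv
  | cons hadj c => exact ⟨_, hadj, hc ▸ (dist_le c).trans_lt (by simp)⟩

end SimpleGraph

namespace Function.IsRootedAt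

variable {p q : V → V} {r v w : V}

theorem connected_fromFun (h : IsRootedAt p r) : (fromFun p).Connected := by
  have hreach (v : V) : (fromFun p).Reachable v r := by
    obtain ⟨k, hk⟩ := h.2 v
    obtain ⟨c, -⟩ := exists_walk_fromFun_iterate p v k
    exact hk ▸ c.reachable
  exact (connected_iff _).mpr ⟨fun u v => (hreach u).trans (hreach v).symm, ⟨r⟩⟩

theorem card_edgeSet_fromFun [Finite V] (h : IsRootedAt p r) :
    Nat.card (fromFun p).edgeSet + 1 = Nat.card V := by
  classical
  let e : {v // v ≠ r} → (fromFun p).edgeSet := fun v =>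
    ⟨s(v.1, p v.1), fromFun_adj_apply (h.apply_ne_self v.2)⟩
  have he : Bijective e := by
    constructor
    · rintro ⟨v, hv⟩ ⟨w, hw⟩ hvw
      have hvw' : s(v, p v) = s(w, p w) := congrArg Subtype.val hvw
      rw [Sym2.eq_iff] at hvw'
      -- the edge `{v, p v} = {p w, w}` with `v ≠ w` would make `v` a point of period two
      refine Subtype.ext (hvw'.elim And.left fun ⟨hvpw, hpvw⟩ => absurd ?_ hv)
      refine h.eq_of_isPeriodicPt two_pos ?_
      rw [IsPeriodicPt, IsFixedPt, show p^[2] v = p (p v) from rfl, hpvw, hvpw]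
    · rintro ⟨e, he⟩
      induction e using Sym2.ind with | _ a b => ?_
      rcases fromFun_adj.mp ((mem_edgeSet _).mp he) with ⟨hne, rfl | rfl⟩
      · exact ⟨⟨a, fun har => hne (by rw [har, h.1.eq])⟩, rfl⟩
      · exact ⟨⟨b, fun hbr => hne (by rw [hbr, h.1.eq])⟩, Subtype.ext Sym2.eq_swap⟩
  rw [← Nat.card_congr (Equiv.ofBijective e he), ← Finite.card_option,
    Nat.card_congr (Equiv.optionSubtypeNe r)]

theorem isTree_fromFun [Finite V] (h : IsRootedAt p r) : (fromFun p).IsTree :=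
  isTree_iff_connected_and_card.mpr ⟨h.connected_fromFun, h.card_edgeSet_fromFun⟩

theorem depth_le_depth_add_one_of_adj [DecidableEq V] (h : IsRootedAt p r)
    (hadj : (fromFun p).Adj v w) : h.depth v ≤ h.depth w + 1 := by
  rcases (fromFun_adj.mp hadj).2 with rfl | rfl
  · exact h.depth_le (by rw [iterate_succ_apply, h.iterate_depth])
  · exact (h.depth_apply_le w).trans (Nat.le_succ _)

theorem depth_le_length [DecidableEq V] (h : IsRootedAt p r) (c : (fromFun p).Walk v r) :
    h.depth v ≤ c.length := by
  induction c with
  | nil => exact (h.depth_eq_zero_iff.mpr rfl).le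
  | cons hadj c ih => exact (h.depth_le_depth_add_one_of_adj hadj).trans (by simpa using ih h)

theorem dist_fromFun [DecidableEq V] (h : IsRootedAt p r) (v : V) :
    (fromFun p).dist v r = h.depth v := by
  refine le_antisymm ?_ ?_
  · have hwalk := exists_walk_fromFun_iterate p v (h.depth v)
    rw [h.iterate_depth] at hwalk
    obtain ⟨c, hc⟩ := hwalk
    exact (dist_le c).trans hc
  · obtain ⟨c, hc⟩ := (h.connected_fromFun v r).exists_walk_length_eq_dist
    exact hc ▸ h.depth_le_length c

theorem eq_apply_of_adj [DecidableEq V] (h : IsRootedAt p r) (hadj : (fromFun p).Adj v w)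
    (hw : h.depth w < h.depth v) : w = p v := by
  rcases (fromFun_adj.mp hadj).2 with hvw | rfl
  · exact hvw.symm
  · exact absurd hw (not_lt.mpr (h.depth_apply_le w))

theorem eq_of_fromFun_eq (hp : IsRootedAt p r) (hq : IsRootedAt q r)
    (he : fromFun p = fromFun q) : p = q := by
  classical
  funext v
  by_cases hv : v = r
  · rw [hv, hp.1.eq, hq.1.eq]
  -- both depths are the distance to `r` in the common graph
  have hdepth (u : V) : hp.depth u = hq.depth u := by
    rw [← hp.dist_fromFun, ← hq.dist_fromFun, he]
  refine (hp.eq_apply_of_adj (he ▸ fromFun_adj_apply (hq.apply_ne_self hv)) ?_).symm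
  rw [hdepth, hdepth, ← hq.depth_apply_add_one hv]
  exact Nat.lt_succ_self _

end Function.IsRootedAt

theorem SimpleGraph.IsTree.exists_isRootedAt_fromFun_eq [Finite V] {G : SimpleGraph V}
    (hG : G.IsTree) (r : V) : ∃ p, IsRootedAt p r ∧ fromFun p = G := by
  classical
  choose parent hadj hlt using fun v (hv : v ≠ r) => hG.connected.exists_adj_dist_lt hv
  let p v := if hv : v = r then r else parent v hv
  have hp : IsRootedAt p r := by
    refine ⟨by simp [IsFixedPt, p], fun v => ?_⟩
    induction hd : G.dist v r using Nat.strong_induction_on generalizing v with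
    | _ d ih =>
      by_cases hv : v = r
      · exact ⟨0, hv⟩
      · obtain ⟨k, hk⟩ := ih _ (hd ▸ hlt v hv) (parent v hv) rfl
        exact ⟨k + 1, by rw [iterate_succ_apply]; simpa [p, hv] using hk⟩
  have hle : fromFun p ≤ G := by
    intro a b hab
    rcases fromFun_adj.mp hab with ⟨hne, rfl | rfl⟩
    · have ha : a ≠ r := fun ha => hne (by simp [p, ha])
      simpa [p, ha] using hadj a ha
    · have hb : b ≠ r := fun hb => hne (by simp [p, hb])
      simpa [p, hb] using (hadj b hb).symm
  exact ⟨p, hp, hp.isTree_fromFun.eq_of_le hle hG.isAcyclic⟩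

theorem card_isRootedAt [Finite V] :
    Nat.card {x : (V → V) × V // IsRootedAt x.1 x.2} =
      Nat.card {G : SimpleGraph V // G.IsTree} * Nat.card V := by
  rw [← Nat.card_prod]
  refine Nat.card_congr (Equiv.ofBijective
    (fun x => (⟨fromFun x.1.1, x.2.isTree_fromFun⟩, x.1.2)) ⟨?_, ?_⟩)
  · rintro ⟨⟨p, r⟩, hp⟩ ⟨⟨q, r'⟩, hq⟩ he
    simp only [Prod.mk.injEq, Subtype.mk.injEq] at he
    obtain ⟨hg, rfl⟩ := he
    exact Subtype.ext (Prod.ext (hp.eq_of_fromFun_eq hq hg) rfl)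
  · rintro ⟨⟨G, hG⟩, r⟩
    obtain ⟨p, hp, rfl⟩ := hG.exists_isRootedAt_fromFun_eq r
    exact ⟨⟨(p, r), hp⟩, rfl⟩

namespace List

section PathFun

variable [DecidableEq V] {L : List V} {g g' : V → V} {v : V}

/-- Each entry of `L` goes to the next one and the last entry is fixed; `g` off `L`. -/
def pathFun (L : List V) (g : V → V) (v : V) : V :=
  if v ∈ L then L.getD (L.idxOf v + 1) v else g v

theorem pathFun_eqOn_compl : EqOn (L.pathFun g) g {v | v ∈ L}ᶜ := fun _ hv => if_neg hv

theorem pathFun_congr (h : EqOn g g' {v | v ∈ L}ᶜ) : L.pathFun g = L.pathFun g' := by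
  funext v
  by_cases hv : v ∈ L
  · simp only [pathFun, if_pos hv]
  · rw [pathFun_eqOn_compl hv, pathFun_eqOn_compl hv, h hv]

theorem pathFun_getElem (hL : L.Nodup) {i : ℕ} (hi : i + 1 < L.length) :
    L.pathFun g L[i] = L[i + 1] := by
  rw [pathFun, if_pos (getElem_mem _), hL.idxOf_getElem, getD_eq_getElem]

theorem pathFun_getLast (hL : L.Nodup) (hne : L ≠ []) :
    L.pathFun g (L.getLast hne) = L.getLast hne := by
  rw [pathFun, if_pos (getLast_mem hne), getLast_eq_getElem, hL.idxOf_getElem,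
    getD_eq_default _ _ (by omega)]

theorem pathFun_iterate_getElem (hL : L.Nodup) {i k : ℕ} (hik : i + k < L.length) :
    (L.pathFun g)^[k] L[i] = L[i + k] := by
  induction k with
  | zero => rfl
  | succ k ih => rw [iterate_succ_apply', ih (by omega), pathFun_getElem hL]; rfl

theorem isRootedAt_pathFun (hL : L.Nodup) (hne : L ≠ []) (hreach : ∀ v, ∃ n, g^[n] v ∈ L) :
    IsRootedAt (L.pathFun g) (L.getLast hne) := by
  refine ⟨pathFun_getLast hL hne, fun v => ?_⟩
  obtain ⟨n, hn⟩ := hreach v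
  obtain ⟨k, hk⟩ := exists_iterate_mem_of_eqOn (s := {v | v ∈ L}) pathFun_eqOn_compl hn
  obtain ⟨i, hi, hiv⟩ := mem_iff_getElem.mp hk
  refine ⟨L.length - 1 - i + k, ?_⟩
  rw [iterate_add_apply, ← hiv, pathFun_iterate_getElem hL (by omega), getLast_eq_getElem]
  congr 1
  omega

theorem spine_pathFun (hL : L.Nodup) (hne : L ≠ [])
    (h : IsRootedAt (L.pathFun g) (L.getLast hne)) : h.spine (L.head hne) = L := by
  have hiter (i : ℕ) (hi : i < L.length) : (L.pathFun g)^[i] (L.head hne) = L[i] := by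
    rw [head_eq_getElem]
    simpa using pathFun_iterate_getElem (g := g) hL (i := 0) (k := i) (by omega)
  have hlen : 0 < L.length := length_pos_iff.mpr hne
  have hdepth : h.depth (L.head hne) = L.length - 1 := by
    refine le_antisymm (h.depth_le ?_) (not_lt.mp fun hlt => ?_)
    · rw [hiter _ (by omega), getLast_eq_getElem]
    · have := ((hiter _ (by omega)).symm.trans (h.iterate_depth _)).trans
        (getLast_eq_getElem hne)
      rw [hL.getElem_inj_iff] at this
      omega
  refine ext_getElem (by rw [h.length_spine, hdepth]; omega) fun i hi _ => ?_
  rw [h.getElem_spine, hiter]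

theorem _root_.Function.IsRootedAt.pathFun_spine {p : V → V} {r b : V} (h : IsRootedAt p r) :
    (h.spine b).pathFun p = p := by
  funext v
  by_cases hv : v ∈ h.spine b
  · obtain ⟨i, hi, rfl⟩ := mem_iff_getElem.mp hv
    by_cases hlast : i + 1 < (h.spine b).length
    · rw [pathFun_getElem h.nodup_spine hlast, h.getElem_spine, h.getElem_spine,
        iterate_succ_apply']
    · have : (h.spine b)[i] = (h.spine b).getLast h.spine_ne_nil := by
        rw [getLast_eq_getElem]
        congr 1
        omega
      rw [this, pathFun_getLast h.nodup_spine, h.getLast_spine, h.1.eq]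
  · exact pathFun_eqOn_compl hv

end PathFun

section UnsortFun

variable [LinearOrder V] {L : List V} {g g' : V → V} {v : V}

/-- The `i`-th smallest entry of `L` goes to `L[i]`; `g` off `L`. -/
def unsortFun (L : List V) (g : V → V) (v : V) : V :=
  if v ∈ L then L.getD ((L.toFinset.sort (· ≤ ·)).idxOf v) v else g v

theorem unsortFun_eqOn_compl : EqOn (L.unsortFun g) g {v | v ∈ L}ᶜ := fun _ hv => if_neg hv

theorem unsortFun_congr (h : EqOn g g' {v | v ∈ L}ᶜ) : L.unsortFun g = L.unsortFun g' := by
  funext v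
  by_cases hv : v ∈ L
  · simp only [unsortFun, if_pos hv]
  · rw [unsortFun_eqOn_compl hv, unsortFun_eqOn_compl hv, h hv]

theorem length_sort_toFinset (hL : L.Nodup) : (L.toFinset.sort (· ≤ ·)).length = L.length := by
  rw [Finset.length_sort, toFinset_card_of_nodup hL]

theorem unsortFun_sort_getElem (hL : L.Nodup) {i : ℕ}
    (hi : i < (L.toFinset.sort (· ≤ ·)).length) :
    L.unsortFun g (L.toFinset.sort (· ≤ ·))[i] = L[i]'(length_sort_toFinset hL ▸ hi) := by
  have hmem : (L.toFinset.sort (· ≤ ·))[i] ∈ L :=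
    mem_toFinset.mp ((Finset.mem_sort _).mp (getElem_mem hi))
  rw [unsortFun, if_pos hmem, (Finset.sort_nodup _ _).idxOf_getElem, getD_eq_getElem]

theorem periodicPts_unsortFun (hL : L.Nodup) (hreach : ∀ v, ∃ n, g^[n] v ∈ L) :
    periodicPts (L.unsortFun g) = {v | v ∈ L} := by
  have hsort {v : V} (hv : v ∈ L) : ∃ i, ∃ hi : i < (L.toFinset.sort (· ≤ ·)).length,
      (L.toFinset.sort (· ≤ ·))[i] = v :=
    mem_iff_getElem.mp (by simpa using hv)
  refine periodicPts_eq_of_injOn L.finite_toSet ?_ ?_ fun v => ?_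
  · intro v hv
    obtain ⟨i, hi, rfl⟩ := hsort hv
    rw [unsortFun_sort_getElem hL]
    exact getElem_mem _
  · intro v hv w hw hvw
    obtain ⟨i, hi, rfl⟩ := hsort hv
    obtain ⟨j, hj, rfl⟩ := hsort hw
    rw [unsortFun_sort_getElem hL, unsortFun_sort_getElem hL, hL.getElem_inj_iff] at hvw
    simp only [hvw]
  · obtain ⟨n, hn⟩ := hreach v
    exact exists_iterate_mem_of_eqOn unsortFun_eqOn_compl hn

end UnsortFun

end List

namespace Function

variable [LinearOrder V]

noncomputable def IsRootedAt.joyal {p : V → V} {r : V} (h : IsRootedAt p r) (b : V) : V → V :=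
  (h.spine b).unsortFun p

variable [Finite V] {f : V → V} {v : V}

noncomputable def cycleList (f : V → V) : List V :=
  ((toFinite (periodicPts f)).toFinset.sort (· ≤ ·)).map f

theorem mem_cycleList : v ∈ cycleList f ↔ v ∈ periodicPts f := by
  simp only [cycleList, List.mem_map, Finset.mem_sort, Finite.mem_toFinset]
  exact ⟨fun ⟨w, hw, hwv⟩ => hwv ▸ (bijOn_periodicPts f).mapsTo hw,
    fun hv => (bijOn_periodicPts f).surjOn hv⟩

theorem nodup_cycleList : (cycleList f).Nodup :=
  (Finset.sort_nodup _ _).map_on fun _ hv _ hw hvw =>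
    (bijOn_periodicPts f).injOn (by simpa using hv) (by simpa using hw) hvw

theorem toFinset_cycleList : (cycleList f).toFinset = (toFinite (periodicPts f)).toFinset := by
  ext v
  simp [mem_cycleList]

theorem cycleList_ne_nil [Nonempty V] : cycleList f ≠ [] := by
  obtain ⟨n, hn⟩ := exists_iterate_mem_periodicPts f (Classical.arbitrary V)
  exact List.ne_nil_of_mem (mem_cycleList.mpr hn)

theorem unsortFun_cycleList : (cycleList f).unsortFun f = f := by
  funext v
  by_cases hv : v ∈ cycleList f
  · have hvP : v ∈ (toFinite (periodicPts f)).toFinset.sort (· ≤ ·) := by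
      simpa using mem_cycleList.mp hv
    have hidx := List.idxOf_lt_length_iff.mpr hvP
    rw [List.unsortFun, if_pos hv, toFinset_cycleList, cycleList,
      List.getD_eq_getElem _ _ (by simpa using hidx), List.getElem_map, List.getElem_idxOf]
  · exact List.unsortFun_eqOn_compl hv

theorem cycleList_unsortFun {L : List V} {g : V → V} (hL : L.Nodup)
    (hper : periodicPts (L.unsortFun g) = {v | v ∈ L}) : cycleList (L.unsortFun g) = L := by
  have hfin : (toFinite (periodicPts (L.unsortFun g))).toFinset = L.toFinset := by
    ext v
    simp [hper]
  refine List.ext_getElem ?_ fun i hi _ => ?_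
  · simp [cycleList, hfin, List.length_sort_toFinset hL]
  · simp only [cycleList, List.getElem_map, hfin]
    exact List.unsortFun_sort_getElem hL _

namespace IsRootedAt

variable {p q : V → V} {r r' b b' : V}

theorem cycleList_joyal (h : IsRootedAt p r) : cycleList (h.joyal b) = h.spine b :=
  cycleList_unsortFun h.nodup_spine <| List.periodicPts_unsortFun h.nodup_spine fun v =>
    ⟨h.depth v, by rw [h.iterate_depth]; exact h.root_mem_spine⟩

theorem pathFun_cycleList_joyal (h : IsRootedAt p r) :
    (cycleList (h.joyal b)).pathFun (h.joyal b) = p := by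
  rw [h.cycleList_joyal, joyal, List.pathFun_congr List.unsortFun_eqOn_compl, h.pathFun_spine]

theorem eq_of_joyal_eq (hp : IsRootedAt p r) (hq : IsRootedAt q r')
    (he : hp.joyal b = hq.joyal b') : p = q ∧ r = r' ∧ b = b' := by
  have hspine : hp.spine b = hq.spine b' := by
    rw [← hp.cycleList_joyal, he, hq.cycleList_joyal]
  refine ⟨?_, Option.some.inj ?_, Option.some.inj ?_⟩
  · rw [← hp.pathFun_cycleList_joyal (b := b), he, hq.pathFun_cycleList_joyal]
  · rw [← hp.getLast?_spine (b := b), ← hq.getLast?_spine (b := b'), hspine]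
  · rw [← hp.head?_spine, ← hq.head?_spine, hspine]

end IsRootedAt

theorem exists_isRootedAt_joyal_eq [Nonempty V] (f : V → V) :
    ∃ p r b, ∃ h : IsRootedAt p r, h.joyal b = f := by
  have hroot := List.isRootedAt_pathFun nodup_cycleList cycleList_ne_nil fun v =>
    (exists_iterate_mem_periodicPts f v).imp fun _ => mem_cycleList.mpr
  refine ⟨_, _, (cycleList f).head cycleList_ne_nil, hroot, ?_⟩
  rw [IsRootedAt.joyal, List.spine_pathFun nodup_cycleList cycleList_ne_nil hroot,
    List.unsortFun_congr List.pathFun_eqOn_compl, unsortFun_cycleList]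

end Function

theorem card_isRootedAt_mul_card [Finite V] [Nonempty V] [LinearOrder V] :
    Nat.card {x : (V → V) × V // IsRootedAt x.1 x.2} * Nat.card V = Nat.card V ^ Nat.card V := by
  rw [← Nat.card_prod, ← Nat.card_fun]
  refine Nat.card_congr (Equiv.ofBijective (fun y => y.1.2.joyal y.2) ⟨?_, fun f => ?_⟩)
  · rintro ⟨⟨⟨p, r⟩, hp⟩, b⟩ ⟨⟨⟨q, r'⟩, hq⟩, b'⟩ he
    obtain ⟨rfl, rfl, rfl⟩ := hp.eq_of_joyal_eq hq he
    rfl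
  · obtain ⟨p, r, b, h, rfl⟩ := exists_isRootedAt_joyal_eq f
    exact ⟨⟨⟨(p, r), h⟩, b⟩, rfl⟩

theorem SimpleGraph.card_isTree [Finite V] [Nonempty V] :
    Nat.card {G : SimpleGraph V // G.IsTree} = Nat.card V ^ (Nat.card V - 2) := by
  have := Fintype.ofFinite V
  let : LinearOrder V := LinearOrder.lift' _ (Fintype.equivFin V).injective
  have hcount := card_isRootedAt_mul_card (V := V)
  rw [card_isRootedAt, mul_assoc, ← sq] at hcount
  have hn : 0 < Nat.card V := Nat.card_pos
  refine Nat.eq_of_mul_eq_mul_right (pow_pos hn 2) (hcount.trans ?_)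
  rw [← pow_add]
  rcases Nat.lt_or_ge (Nat.card V) 2 with hlt | hge
  · obtain hone : Nat.card V = 1 := by omega
    rw [hone, one_pow, one_pow]
  · rw [Nat.sub_add_cancel hge]

/-- Cayley's formula: the number of labeled trees (connected acyclic simple
graphs) on `m + 1` vertices is `(m + 1) ^ (m - 1)`. -/
theorem cayley_formula (m : ℕ) :
    Nat.card {G : SimpleGraph (Fin (m + 1)) // G.Connected ∧ G.IsAcyclic} =
      (m + 1) ^ (m - 1) := by
  simp_rw [← isTree_iff]
  simpa using card_isTree (V := Fin (m + 1))
end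

section
/- Rhombus-parallelogram lemma (sector conservation, simplified form): let p1, p2, p3, p4 be unit vectors in R^2 with |p1+p2+p3+p4| <= delta for some 0 <= delta <= 1. Then there is a pairing of {p1,p2,p3,p4} into two pairs {p,p'} and {q,q'} such that max(|angle(p', -p)|, |angle(q', -q)|) <= a*sqrt(delta) + b*delta for some absolute constants a, b; that is, min over pairings of max(|angle(p', -p)|, |angle(q', -q)|) <= a*sqrt(delta) + b*delta. -/
open InnerProductGeometry RealInnerProductSpace

private theorem rp_angle_le {E : Type*} [NormedAddCommGroup E] [InnerProductSpace ℝ E]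
    (q q' : E) (hq : ‖q‖ = 1) (hq' : ‖q'‖ = 1) :
    angle q' (-q) ≤ Real.pi / 2 * ‖q + q'‖ := by
  set θ := angle q' (-q) with hθ
  have h0 : 0 ≤ θ := angle_nonneg _ _
  have hπ : θ ≤ Real.pi := angle_le_pi _ _
  have hcos : Real.cos θ = -⟪q, q'⟫ := by
    rw [hθ, cos_angle, inner_neg_right, norm_neg, hq, hq', real_inner_comm]
    ring
  have hsq : ‖q + q'‖ ^ 2 = 2 - 2 * Real.cos θ := by
    rw [norm_add_sq_real, hq, hq', hcos]; ring
  have hsin : Real.sin (θ / 2) ^ 2 = ‖q + q'‖ ^ 2 / 4 := by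
    have := Real.sin_sq_eq_half_sub (θ / 2)
    rw [show 2 * (θ / 2) = θ by ring] at this
    rw [this, hsq]; ring
  have hsinn : 0 ≤ Real.sin (θ / 2) :=
    Real.sin_nonneg_of_nonneg_of_le_pi (by linarith) (by linarith [Real.pi_pos])
  have hs2 : Real.sin (θ / 2) = ‖q + q'‖ / 2 := by
    nlinarith [norm_nonneg (q + q')]
  have hj : 2 / Real.pi * (θ / 2) ≤ Real.sin (θ / 2) :=
    Real.mul_le_sin (by linarith) (by linarith)
  have hπ0 := Real.pi_pos
  rw [hs2] at hj
  rw [div_mul_eq_mul_div, div_le_div_iff₀ hπ0 (by norm_num)] at hj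
  nlinarith

private theorem rp_cplx_prod (z1 z2 z3 z4 : ℂ) (h1 : ‖z1‖ = 1)
    (h2 : ‖z2‖ = 1) (h3 : ‖z3‖ = 1) (h4 : ‖z4‖ = 1) :
    ‖z1 + z2‖ * ‖z1 + z3‖ * ‖z1 + z4‖ ≤
      2 * ‖z1 + z2 + z3 + z4‖ := by
  have mku : ∀ z : ℂ, ‖z‖ = 1 → z * (starRingEnd ℂ) z = 1 := by
    intro z hz
    rw [Complex.mul_conj, Complex.normSq_eq_norm_sq, hz]; norm_num
  have u1 := mku z1 h1; have u2 := mku z2 h2; have u3 := mku z3 h3; have u4 := mku z4 h4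
  have key : (z1 + z2) * (z1 + z3) * (z1 + z4)
      = z1 ^ 2 * (z1 + z2 + z3 + z4)
        + z1 * z2 * z3 * z4 * (starRingEnd ℂ) (z1 + z2 + z3 + z4) := by
    simp only [map_add]
    linear_combination (-(z2 * z3 * z4)) * u1 - z1 * z3 * z4 * u2 - z1 * z2 * z4 * u3 -
      z1 * z2 * z3 * u4
  calc ‖z1 + z2‖ * ‖z1 + z3‖ * ‖z1 + z4‖
      = ‖(z1 + z2) * (z1 + z3) * (z1 + z4)‖ := by rw [norm_mul, norm_mul]
    _ ≤ ‖z1 ^ 2 * (z1 + z2 + z3 + z4)‖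
        + ‖z1 * z2 * z3 * z4 * (starRingEnd ℂ) (z1 + z2 + z3 + z4)‖ := by
        rw [key]; exact norm_add_le _ _
    _ = 2 * ‖z1 + z2 + z3 + z4‖ := by
        simp only [norm_mul, norm_pow, Complex.norm_conj, h1, h2, h3, h4]; ring

private noncomputable def rpToC (v : EuclideanSpace ℝ (Fin 2)) : ℂ := ⟨v 0, v 1⟩

private theorem rpToC_add (u v : EuclideanSpace ℝ (Fin 2)) :
    rpToC (u + v) = rpToC u + rpToC v := by
  simp [rpToC, Complex.ext_iff]

private theorem rpToC_abs (v : EuclideanSpace ℝ (Fin 2)) : ‖rpToC v‖ = ‖v‖ := by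
  rw [EuclideanSpace.norm_eq, Complex.norm_def, Complex.normSq_apply]
  simp [rpToC, Fin.sum_univ_two, sq]

private theorem rp_prod2d (p1 p2 p3 p4 : EuclideanSpace ℝ (Fin 2)) (h1 : ‖p1‖ = 1)
    (h2 : ‖p2‖ = 1) (h3 : ‖p3‖ = 1) (h4 : ‖p4‖ = 1) :
    ‖p1 + p2‖ * ‖p1 + p3‖ * ‖p1 + p4‖ ≤ 2 * ‖p1 + p2 + p3 + p4‖ := by
  have := rp_cplx_prod (rpToC p1) (rpToC p2) (rpToC p3) (rpToC p4)
    (by rw [rpToC_abs, h1]) (by rw [rpToC_abs, h2]) (by rw [rpToC_abs, h3])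
    (by rw [rpToC_abs, h4])
  simpa [← rpToC_add, rpToC_abs] using this

private theorem rp_pair (δ : ℝ) (p q r s : EuclideanSpace ℝ (Fin 2)) (hδ0 : 0 ≤ δ)
    (hp : ‖p‖ = 1) (hq : ‖q‖ = 1) (hr : ‖r‖ = 1) (hs : ‖s‖ = 1)
    (hsum : ‖p + q + r + s‖ ≤ δ)
    (hpq : ‖p + q‖ ≤ Real.sqrt 2 * Real.sqrt δ) :
    angle q (-p) ≤ Real.pi * Real.sqrt 2 * Real.sqrt δ + Real.pi / 2 * δ ∧
    angle s (-r) ≤ Real.pi * Real.sqrt 2 * Real.sqrt δ + Real.pi / 2 * δ := by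
  have hπ0 := Real.pi_pos
  have hsδ : 0 ≤ Real.sqrt δ := Real.sqrt_nonneg _
  have hs2 : 0 ≤ Real.sqrt 2 := Real.sqrt_nonneg _
  have hrs : ‖r + s‖ ≤ δ + Real.sqrt 2 * Real.sqrt δ := by
    have heq : r + s = (p + q + r + s) - (p + q) := by abel
    calc ‖r + s‖ = ‖(p + q + r + s) - (p + q)‖ := by rw [← heq]
      _ ≤ ‖p + q + r + s‖ + ‖p + q‖ := norm_sub_le _ _
      _ ≤ δ + Real.sqrt 2 * Real.sqrt δ := add_le_add hsum hpq
  have hPT : 0 ≤ Real.pi * (Real.sqrt 2 * Real.sqrt δ) := by positivity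
  have hPd : 0 ≤ Real.pi / 2 * δ := by positivity
  constructor
  · have h := rp_angle_le p q hp hq
    have h2 : Real.pi * ‖p + q‖ ≤ Real.pi * (Real.sqrt 2 * Real.sqrt δ) :=
      mul_le_mul_of_nonneg_left hpq hπ0.le
    nlinarith [norm_nonneg (p + q)]
  · have h := rp_angle_le r s hr hs
    have h2 : Real.pi * ‖r + s‖ ≤ Real.pi * (δ + Real.sqrt 2 * Real.sqrt δ) :=
      mul_le_mul_of_nonneg_left hrs hπ0.le
    nlinarith [norm_nonneg (r + s)]

/-- Rhombus–parallelogram lemma (sector conservation, simplified form): there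
are absolute constants `a`, `b` such that any four unit vectors of `ℝ²` whose
sum has norm at most `δ ≤ 1` can be paired into two pairs `{q, q'}`, `{r, r'}`
with the angle between `q'` and `-q` (resp. `r'` and `-r`) at most
`a √δ + b δ`. -/
theorem rhombus_parallelogram :
    ∃ a b : ℝ, 0 < a ∧ 0 < b ∧
      ∀ (δ : ℝ) (p1 p2 p3 p4 : EuclideanSpace ℝ (Fin 2)),
        0 ≤ δ → δ ≤ 1 →
        ‖p1‖ = 1 → ‖p2‖ = 1 → ‖p3‖ = 1 → ‖p4‖ = 1 →
        ‖p1 + p2 + p3 + p4‖ ≤ δ →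
        ∃ q q' r r' : EuclideanSpace ℝ (Fin 2),
          ({q, q', r, r'} : Multiset (EuclideanSpace ℝ (Fin 2))) =
            {p1, p2, p3, p4} ∧
          InnerProductGeometry.angle q' (-q) ≤ a * Real.sqrt δ + b * δ ∧
          InnerProductGeometry.angle r' (-r) ≤ a * Real.sqrt δ + b * δ := by
  have hπ0 := Real.pi_pos
  have hs2 : (0:ℝ) < Real.sqrt 2 := by positivity
  refine ⟨Real.pi * Real.sqrt 2, Real.pi / 2, by positivity, by positivity, ?_⟩
  intro δ p1 p2 p3 p4 hδ0 hδ1 h1 h2 h3 h4 hsum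
  have hsδ : 0 ≤ Real.sqrt δ := Real.sqrt_nonneg _
  by_cases hhalf : 1/2 ≤ δ
  · -- trivial case: the bound exceeds π
    have hb : Real.pi ≤ Real.pi * Real.sqrt 2 * Real.sqrt δ + Real.pi / 2 * δ := by
      have h1' : Real.sqrt (1/2) ≤ Real.sqrt δ := Real.sqrt_le_sqrt hhalf
      have h2' : Real.sqrt 2 * Real.sqrt (1/2) = 1 := by
        rw [← Real.sqrt_mul (by norm_num : (0:ℝ) ≤ 2)]
        norm_num
      have h3' : Real.pi * Real.sqrt 2 * Real.sqrt (1/2) = Real.pi := by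
        rw [mul_assoc, h2', mul_one]
      have h4' : Real.pi * Real.sqrt 2 * Real.sqrt (1/2) ≤ Real.pi * Real.sqrt 2 * Real.sqrt δ :=
        mul_le_mul_of_nonneg_left h1' (by positivity)
      nlinarith
    exact ⟨p1, p2, p3, p4, rfl,
      le_trans (angle_le_pi _ _) hb, le_trans (angle_le_pi _ _) hb⟩
  · push_neg at hhalf
    -- some inner product with p1 is ≥ -1/2
    have hinner : -1/2 ≤ ⟪p1, p2⟫ ∨ -1/2 ≤ ⟪p1, p3⟫ ∨ -1/2 ≤ ⟪p1, p4⟫ := by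
      by_contra hcon
      push_neg at hcon
      obtain ⟨ha, hb, hc⟩ := hcon
      have h11 : ⟪p1, p1⟫ = 1 := by
        rw [real_inner_self_eq_norm_sq, h1]; norm_num
      have hS : ⟪p1, p1 + p2 + p3 + p4⟫ < -1/2 := by
        rw [inner_add_right, inner_add_right, inner_add_right, h11]
        linarith
      have habs : |⟪p1, p1 + p2 + p3 + p4⟫| ≤ ‖p1‖ * ‖p1 + p2 + p3 + p4‖ :=
        abs_real_inner_le_norm _ _
      rw [h1, one_mul] at habs
      have := abs_le.mp (le_trans habs hsum)
      linarith
    -- one of the three pair sums with p1 is small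
    have hmin : ∀ x y : ℝ, 0 ≤ x → 0 ≤ y → x * y ≤ 2 * δ →
        x ≤ Real.sqrt 2 * Real.sqrt δ ∨ y ≤ Real.sqrt 2 * Real.sqrt δ := by
      intro x y hx hy hxy
      by_contra hcon
      push_neg at hcon
      have hsq : (Real.sqrt 2 * Real.sqrt δ) ^ 2 = 2 * δ := by
        rw [mul_pow, Real.sq_sqrt (by norm_num : (0:ℝ) ≤ 2), Real.sq_sqrt hδ0]
      nlinarith [hcon.1, hcon.2, mul_nonneg hs2.le hsδ]
    have hone : ∀ x : EuclideanSpace ℝ (Fin 2), ‖x‖ = 1 → -1/2 ≤ ⟪p1, x⟫ →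
        1 ≤ ‖p1 + x‖ := by
      intro x hx hin
      have hns : ‖p1 + x‖ ^ 2 = 2 + 2 * ⟪p1, x⟫ := by
        rw [norm_add_sq_real, h1, hx]; ring
      nlinarith [norm_nonneg (p1 + x)]
    have hprod := rp_prod2d p1 p2 p3 p4 h1 h2 h3 h4
    have hprod' : ‖p1 + p2‖ * ‖p1 + p3‖ * ‖p1 + p4‖ ≤ 2 * δ := by nlinarith
    have n2 := norm_nonneg (p1 + p2)
    have n3 := norm_nonneg (p1 + p3)
    have n4 := norm_nonneg (p1 + p4)
    have hex : ‖p1 + p2‖ ≤ Real.sqrt 2 * Real.sqrt δ ∨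
        ‖p1 + p3‖ ≤ Real.sqrt 2 * Real.sqrt δ ∨
        ‖p1 + p4‖ ≤ Real.sqrt 2 * Real.sqrt δ := by
      rcases hinner with hin | hin | hin
      · have hge := hone p2 h2 hin
        have : ‖p1 + p3‖ * ‖p1 + p4‖ ≤ 2 * δ := by nlinarith
        rcases hmin _ _ n3 n4 this with h | h
        · exact Or.inr (Or.inl h)
        · exact Or.inr (Or.inr h)
      · have hge := hone p3 h3 hin
        have : ‖p1 + p2‖ * ‖p1 + p4‖ ≤ 2 * δ := by nlinarith
        rcases hmin _ _ n2 n4 this with h | h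
        · exact Or.inl h
        · exact Or.inr (Or.inr h)
      · have hge := hone p4 h4 hin
        have : ‖p1 + p2‖ * ‖p1 + p3‖ ≤ 2 * δ := by nlinarith
        rcases hmin _ _ n2 n3 this with h | h
        · exact Or.inl h
        · exact Or.inr (Or.inl h)
    rcases hex with hsm | hsm | hsm
    · obtain ⟨hA, hB⟩ := rp_pair δ p1 p2 p3 p4 hδ0 h1 h2 h3 h4 hsum hsm
      exact ⟨p1, p2, p3, p4, rfl, hA, hB⟩
    · have hsum' : ‖p1 + p3 + p2 + p4‖ ≤ δ := by
        rw [show p1 + p3 + p2 + p4 = p1 + p2 + p3 + p4 from by abel]; exact hsum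
      obtain ⟨hA, hB⟩ := rp_pair δ p1 p3 p2 p4 hδ0 h1 h3 h2 h4 hsum' hsm
      refine ⟨p1, p3, p2, p4, ?_, hA, hB⟩
      change p1 ::ₘ p3 ::ₘ p2 ::ₘ {p4} = p1 ::ₘ p2 ::ₘ p3 ::ₘ {p4}
      rw [Multiset.cons_swap p3 p2]
    · have hsum' : ‖p1 + p4 + p2 + p3‖ ≤ δ := by
        rw [show p1 + p4 + p2 + p3 = p1 + p2 + p3 + p4 from by abel]; exact hsum
      obtain ⟨hA, hB⟩ := rp_pair δ p1 p4 p2 p3 hδ0 h1 h4 h2 h3 hsum' hsm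
      refine ⟨p1, p4, p2, p3, ?_, hA, hB⟩
      change p1 ::ₘ p4 ::ₘ p2 ::ₘ {p3} = p1 ::ₘ p2 ::ₘ p3 ::ₘ {p4}
      rw [Multiset.cons_swap p4 p2]
      congr 2
      rw [show ({p3} : Multiset (EuclideanSpace ℝ (Fin 2))) = p3 ::ₘ 0 from rfl,
        show ({p4} : Multiset (EuclideanSpace ℝ (Fin 2))) = p4 ::ₘ 0 from rfl,
        Multiset.cons_swap p4 p3]
end
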